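/- Let f(i) = sum_{k=i}^infinity gamma_k^2 where gamma is a positive square-summable sequence that is non-increasing from some index N onward, and let the chain be uniformly bounded with bound d with drifts gamma_i. Then for all i >= N, the Lyapunov increment Delta f(i) = sum_j p_{ij}(f(j) - f(i)) satisfies Delta f(i) <= -gamma_i^3 + d * max_{|k-i| <= d} |gamma_k^2 - gamma_i^2|. -/

import Mathlib

open scoped ENNReal BigOperators
open Filter

/-- A discrete-time Markov chain on the nonnegative integers, given by its
row-stochastic transition matrix. -/
structure MarkovChain where
  p : ℕ → ℕ → ℝ≥0∞
  row_sum : ∀ i, ∑' j, p i j = 1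

namespace MarkovChain

/-- `n`-step transition probabilities. -/
noncomputable def step (M : MarkovChain) : ℕ → ℕ → ℕ → ℝ≥0∞
  | 0, i, j => if i = j then 1 else 0
  | (n+1), i, j => ∑' k, M.p i k * M.step n k j

/-- Irreducibility: every state reaches every other state with positive probability. -/
def Irreducible (M : MarkovChain) : Prop := ∀ i j, ∃ n, 0 < M.step n i j

/-- Probability, starting from `j`, that the chain reaches state `i` for the first
time at time `n` (time `0` counts iff `j = i`). -/
noncomputable def hitAt (M : MarkovChain) (i : ℕ) : ℕ → ℕ → ℝ≥0∞
  | 0, j => if j = i then 1 else 0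
  | (n+1), j => if j = i then 0 else ∑' k, M.p j k * M.hitAt i n k

/-- Probability that the first return to `i` occurs at time `n + 1`. -/
noncomputable def firstReturn (M : MarkovChain) (i n : ℕ) : ℝ≥0∞ :=
  ∑' k, M.p i k * M.hitAt i n k

/-- The chain is recurrent: return to each state is almost sure. -/
def Recurrent (M : MarkovChain) : Prop := ∀ i, ∑' n, M.firstReturn i n = 1

/-- The chain is positive recurrent: recurrent with finite expected return times. -/
def PositiveRecurrent (M : MarkovChain) : Prop :=
  M.Recurrent ∧ ∀ i, ∑' n : ℕ, ((n : ℝ≥0∞) + 1) * M.firstReturn i n < ⊤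

/-- Null recurrent: recurrent but not positive recurrent. -/
def NullRecurrent (M : MarkovChain) : Prop := M.Recurrent ∧ ¬ M.PositiveRecurrent

/-- The chain is transient: return to each state happens with probability `< 1`. -/
def Transient (M : MarkovChain) : Prop := ∀ i, ∑' n, M.firstReturn i n < 1

/-- Mean drift at state `i`. -/
noncomputable def drift (M : MarkovChain) (i : ℕ) : ℝ :=
  ∑' j, (M.p i j).toReal * ((j : ℝ) - i)

/-- The mean drift at `i` is finite (well-defined). -/
def DriftFinite (M : MarkovChain) (i : ℕ) : Prop :=
  Summable fun j => (M.p i j).toReal * ((j : ℝ) - i)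

/-- Second-moment drift at state `i`. -/
noncomputable def secondMoment (M : MarkovChain) (i : ℕ) : ℝ :=
  ∑' j, (M.p i j).toReal * ((j : ℝ) - i) ^ 2

/-- Downward uniformly bounded with bound `k`: no downward jumps longer than `k`. -/
def DownwardBounded (M : MarkovChain) (k : ℕ) : Prop :=
  ∀ i j, j + k < i → M.p i j = 0

/-- Uniformly bounded with bound `d`: no jumps longer than `d`. -/
def UniformlyBounded (M : MarkovChain) (d : ℕ) : Prop :=
  ∀ i j : ℕ, (d : ℤ) < |(i : ℤ) - j| → M.p i j = 0

end MarkovChain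

/-!
Writing `f(j) - f(i) = -(j - i) γ_i² + Σ_k (γ_k² - γ_i²)`, with the error sum running over the
at most `|j - i| ≤ d` indices between `i` and `j`, and averaging over `p_{ij}` turns the linear
part into `-γ_i² · drift(i) = -γ_i³` and leaves an error of at most `d · max |γ_k² - γ_i²|`.
-/

open Finset

/-- The paper's Lyapunov function `f` is `tailSum (γ · ^ 2)`. -/
noncomputable def tailSum (g : ℕ → ℝ) (j : ℕ) : ℝ := ∑' k, if j ≤ k then g k else 0

section TailSum

variable {g : ℕ → ℝ}

lemma summable_ite_le (hg : Summable g) (b : ℕ) :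
    Summable fun k => if b ≤ k then g k else 0 :=
  (hg.indicator {k | b ≤ k}).congr fun k => by simp [Set.indicator_apply]

lemma tailSum_eq_sum_Ico_add (hg : Summable g) {a b : ℕ} (hab : a ≤ b) :
    tailSum g a = ∑ k ∈ Ico a b, g k + tailSum g b := by
  have hsplit : ∀ k, (if a ≤ k then g k else 0)
      = (if k ∈ Ico a b then g k else 0) + if b ≤ k then g k else 0 := by
    intro k
    by_cases hb : b ≤ k
    · simp [hb, hab.trans hb]
    · simp [hb, mem_Ico, not_le.mp hb]
  unfold tailSum
  rw [tsum_congr hsplit, Summable.tsum_add (summable_of_ne_finset_zero fun k hk => if_neg hk)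
    (summable_ite_le hg b), tsum_eq_sum fun k hk => if_neg hk, sum_ite_mem, inter_self]

lemma abs_sum_Ico_sub_le (c B : ℝ) {a b : ℕ} (hB : ∀ k ∈ Ico a b, |g k - c| ≤ B) :
    |∑ k ∈ Ico a b, g k - (b - a : ℕ) * c| ≤ (b - a : ℕ) * B := by
  have hsum : ∑ k ∈ Ico a b, g k - (b - a : ℕ) * c = ∑ k ∈ Ico a b, (g k - c) := by
    rw [sum_sub_distrib, sum_const, Nat.card_Ico, nsmul_eq_mul]
  calc |∑ k ∈ Ico a b, g k - (b - a : ℕ) * c|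
      ≤ ∑ k ∈ Ico a b, |g k - c| := hsum ▸ abs_sum_le_sum_abs _ _
    _ ≤ (b - a : ℕ) * B := by
      simpa [Nat.card_Ico] using sum_le_card_nsmul _ _ _ hB

lemma abs_tailSum_sub_tailSum_add_le (hg : Summable g) (c B : ℝ) (i j : ℕ)
    (hB : ∀ k, min i j ≤ k → k < max i j → |g k - c| ≤ B) :
    |tailSum g j - tailSum g i + ((j : ℝ) - i) * c| ≤ |(j : ℝ) - i| * B := by
  rcases le_total j i with h | h
  · have hB' : ∀ k ∈ Ico j i, |g k - c| ≤ B := fun k hk => by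
      rw [mem_Ico] at hk; exact hB k (by omega) (by omega)
    have := abs_sum_Ico_sub_le c B hB'
    rw [Nat.cast_sub h] at this
    rw [tailSum_eq_sum_Ico_add hg h, abs_of_nonpos (a := (j : ℝ) - i) (by simpa using h)]
    convert this using 2 <;> ring
  · have hB' : ∀ k ∈ Ico i j, |g k - c| ≤ B := fun k hk => by
      rw [mem_Ico] at hk; exact hB k (by omega) (by omega)
    have := abs_sum_Ico_sub_le c B hB'
    rw [Nat.cast_sub h, ← abs_neg] at this
    rw [tailSum_eq_sum_Ico_add hg h, abs_of_nonneg (a := (j : ℝ) - i) (by simpa using h)]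
    convert this using 2; ring

end TailSum

namespace MarkovChain

variable (M : MarkovChain)

lemma p_ne_top (i j : ℕ) : M.p i j ≠ ⊤ :=
  ne_top_of_le_ne_top ENNReal.one_ne_top ((ENNReal.le_tsum j).trans (M.row_sum i).le)

lemma sum_toReal_p_le_one (i : ℕ) (s : Finset ℕ) :
    ∑ j ∈ s, (M.p i j).toReal ≤ 1 := by
  rw [← ENNReal.toReal_sum fun j _ => M.p_ne_top i j]
  exact ENNReal.toReal_le_of_le_ofReal zero_le_one
    (by simpa using (ENNReal.sum_le_tsum s).trans (M.row_sum i).le)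

variable {M} {d : ℕ}

lemma UniformlyBounded.p_eq_zero (hub : M.UniformlyBounded d) {i j : ℕ}
    (hj : j ∉ Icc (i - d) (i + d)) : M.p i j = 0 := by
  rw [mem_Icc] at hj
  exact hub i j (by rw [lt_abs]; omega)

lemma UniformlyBounded.tsum_mul_eq_sum (hub : M.UniformlyBounded d) (i : ℕ) (φ : ℕ → ℝ) :
    ∑' j, (M.p i j).toReal * φ j = ∑ j ∈ Icc (i - d) (i + d), (M.p i j).toReal * φ j :=
  tsum_eq_sum fun j hj => by simp [hub.p_eq_zero hj]

lemma UniformlyBounded.tsum_le_neg_mul_drift_add (hub : M.UniformlyBounded d) (i : ℕ)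
    (φ : ℕ → ℝ) (c D : ℝ) (hD : 0 ≤ D)
    (hφ : ∀ j ∈ Icc (i - d) (i + d), φ j + ((j : ℝ) - i) * c ≤ D) :
    ∑' j, (M.p i j).toReal * φ j ≤ -(c * M.drift i) + D := by
  set S := Icc (i - d) (i + d)
  have hdrift : M.drift i = ∑ j ∈ S, (M.p i j).toReal * ((j : ℝ) - i) := hub.tsum_mul_eq_sum i _
  calc ∑' j, (M.p i j).toReal * φ j
      = ∑ j ∈ S, (M.p i j).toReal * (φ j + ((j : ℝ) - i) * c) - c * M.drift i := by
        rw [hub.tsum_mul_eq_sum, hdrift, mul_sum, ← sum_sub_distrib]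
        exact sum_congr rfl fun j _ => by ring
    _ ≤ (∑ j ∈ S, (M.p i j).toReal) * D - c * M.drift i := by
        rw [sum_mul]
        gcongr with j hj
        exact hφ j hj
    _ ≤ -(c * M.drift i) + D := by
        linarith [mul_le_of_le_one_left hD (M.sum_toReal_p_le_one i S)]

end MarkovChain

/-- the key increment bound for the Lyapunov function
`f i = ∑_{k ≥ i} γ_k²`. -/
theorem stmt9 (M : MarkovChain) (d : ℕ) (hub : M.UniformlyBounded d)
    (γ : ℕ → ℝ) (hdrift : ∀ i, M.drift i = γ i)
    (hsq : Summable fun k => γ k ^ 2)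
    (N : ℕ) :
    ∀ i, N ≤ i →
      (∑' j : ℕ, (M.p i j).toReal *
          ((∑' k : ℕ, if j ≤ k then γ k ^ 2 else 0) -
           (∑' k : ℕ, if i ≤ k then γ k ^ 2 else 0)))
        ≤ -(γ i ^ 3) +
          (d : ℝ) * ((Finset.Icc (i - d) (i + d)).sup'
            (Finset.nonempty_Icc.mpr (by omega))
            fun k => |γ k ^ 2 - γ i ^ 2|) := by
  intro i _
  set B := (Icc (i - d) (i + d)).sup' (nonempty_Icc.mpr (by omega)) fun k => |γ k ^ 2 - γ i ^ 2|
  have hB : ∀ k ∈ Icc (i - d) (i + d), |γ k ^ 2 - γ i ^ 2| ≤ B := fun k hk =>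
    le_sup' (fun k => |γ k ^ 2 - γ i ^ 2|) hk
  have hB0 : 0 ≤ B := (abs_nonneg _).trans (hB i (by simp))
  have hgap : ∀ j ∈ Icc (i - d) (i + d), |(j : ℝ) - i| ≤ d := fun j hj => by
    rw [mem_Icc] at hj
    rw [abs_sub_le_iff, sub_le_iff_le_add, sub_le_iff_le_add]
    exact ⟨by exact_mod_cast (by omega : j ≤ d + i),
      by exact_mod_cast (by omega : i ≤ d + j)⟩
  calc _ ≤ -(γ i ^ 2 * M.drift i) + d * B := by
        refine hub.tsum_le_neg_mul_drift_add i
          (fun j => tailSum (γ · ^ 2) j - tailSum (γ · ^ 2) i) _ _ (by positivity) fun j hj => ?_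
        refine (le_abs_self _).trans ((abs_tailSum_sub_tailSum_add_le hsq _ B i j ?_).trans ?_)
        · exact fun k hk₁ hk₂ => hB k (by rw [mem_Icc] at hj ⊢; omega)
        · exact mul_le_mul_of_nonneg_right (hgap j hj) hB0
    _ = _ := by rw [hdrift]; ring
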